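/- Let f : ℝⁿ → ℝⁿ be C¹, Φ the flow of x' = f(x), and suppose for all x in the reachable tube from X_in over [0,1] the vector (1/2)·Df(x)(f(x)) lies in a convex set C. Then for every u ∈ X_in, Φ(1,u) ∈ {u + f(u)} + C; consequently if {u + f(u) : u ∈ X_in} + C ⊆ X_s, the neural ODE satisfies the safety property {Φ(1,u) : u ∈ X_in} ⊆ X_s. -/

import Mathlib

/-!
Along a trajectory `g t = Φ t u` we have `g' = f ∘ g` and `g'' = Df(g)(f ∘ g)`, so Taylor's
formula with integral remainder reads `Φ 1 u = u + f u + ∫₀¹ (1 - t) g''(t) dt`. The remainder is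
the mean of `½ g''` under the Beta(1, 2) distribution, whose density is `2 (1 - t)` on `[0, 1]`.
A mean of a continuous function with values in the convex set `C` lies in `C` even if `C` is not
closed: it lies in the convex hull of the compact image, which is compact by Carathéodory's
theorem and contained in `C`.
-/

open Pointwise
open Set MeasureTheory ProbabilityTheory

variable {E : Type*} [NormedAddCommGroup E] [NormedSpace ℝ E]

def convexCombinations (K : Set E) (m : ℕ) : Set E :=
  (fun p : (Fin m → ℝ) × (Fin m → E) => ∑ i, p.1 i • p.2 i) ''
    (stdSimplex ℝ (Fin m) ×ˢ univ.pi fun _ => K)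

theorem IsCompact.convexCombinations {K : Set E} (hK : IsCompact K) (m : ℕ) :
    IsCompact (convexCombinations K m) :=
  ((isCompact_stdSimplex ℝ (Fin m)).prod (isCompact_univ_pi fun _ => hK)).image <| by fun_prop

theorem convexCombinations_subset_convexHull (K : Set E) (m : ℕ) :
    convexCombinations K m ⊆ convexHull ℝ K := by
  rintro _ ⟨⟨w, z⟩, ⟨hw, hz⟩, rfl⟩
  exact (convex_convexHull ℝ K).sum_mem (fun i _ => hw.1 i) hw.2
    fun i _ => subset_convexHull ℝ K (hz i trivial)

theorem convexHull_subset_biUnion_convexCombinations [FiniteDimensional ℝ E] (K : Set E) :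
    convexHull ℝ K ⊆ ⋃ m ∈ Finset.range (Module.finrank ℝ E + 2), convexCombinations K m := by
  intro x hx
  obtain ⟨ι, _, z, w, hzK, hz, hw, hw1, rfl⟩ := eq_pos_convex_span_of_mem_convexHull hx
  have hcard : Fintype.card ι ≤ Module.finrank ℝ E + 1 :=
    hz.card_le_finrank_succ.trans <| by
      gcongr; exact Submodule.finrank_le _
  let e := Fintype.equivFin ι
  refine mem_biUnion (x := Fintype.card ι) (Finset.mem_range.2 (by omega))
    ⟨(w ∘ e.symm, z ∘ e.symm), ⟨⟨fun i => (hw _).le, ?_⟩, fun i _ => hzK ⟨_, rfl⟩⟩, ?_⟩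
  · simpa [← hw1] using e.symm.sum_comp w
  · exact e.symm.sum_comp fun i => w i • z i

theorem IsCompact.convexHull [FiniteDimensional ℝ E] {K : Set E} (hK : IsCompact K) :
    IsCompact (convexHull ℝ K) := by
  rw [(convexHull_subset_biUnion_convexCombinations K).antisymm
    (iUnion₂_subset fun m _ => convexCombinations_subset_convexHull K m)]
  exact (Finset.range _).isCompact_biUnion fun m _ => hK.convexCombinations m

theorem Convex.integral_mem_of_continuousOn [FiniteDimensional ℝ E] {α : Type*}
    [TopologicalSpace α] [T2Space α] [MeasurableSpace α] [OpensMeasurableSpace α]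
    {μ : Measure α} [IsProbabilityMeasure μ]
    {s : Set α} {C : Set E} {c : α → E} (hC : Convex ℝ C) (hs : IsCompact s)
    (hμs : ∀ᵐ x ∂μ, x ∈ s) (hc : ContinuousOn c s) (hcC : MapsTo c s C) :
    ∫ x, c x ∂μ ∈ C := by
  have hcK : ∀ᵐ x ∂μ, c x ∈ convexHull ℝ (c '' s) :=
    hμs.mono fun x hx => subset_convexHull ℝ _ (mem_image_of_mem c hx)
  have hci : Integrable c μ := by
    rw [← Measure.restrict_eq_self_of_ae_mem hμs]
    exact hc.integrableOn_compact hs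
  exact convexHull_min hcC.image_subset hC <|
    (convex_convexHull ℝ _).integral_mem (hs.image_of_continuousOn hc).convexHull.isClosed hcK hci

theorem betaPDFReal_one_two (x : ℝ) :
    betaPDFReal 1 2 x = (Ioo 0 1).indicator (fun x => 2 * (1 - x)) x := by
  have hΓ3 : Real.Gamma (1 + 2) = 2 := by
    rw [show (1 + 2 : ℝ) = (2 : ℕ) + 1 by norm_num, Real.Gamma_nat_eq_factorial]; norm_num
  by_cases hx : x ∈ Ioo 0 1
  · norm_num [betaPDFReal, hx.1, hx.2, hx, beta, hΓ3]
  · rw [betaPDFReal, if_neg (show ¬(0 < x ∧ x < 1) from hx), indicator_of_notMem hx]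

theorem integral_betaMeasure_one_two (g : ℝ → E) :
    ∫ x, g x ∂betaMeasure 1 2 = ∫ x in (0 : ℝ)..1, (2 * (1 - x)) • g x := by
  have hpdf : ∀ x, (betaPDF 1 2 x).toReal = (Ioo 0 1).indicator (fun x => 2 * (1 - x)) x := by
    intro x
    rw [betaPDF, betaPDFReal_one_two, ENNReal.toReal_ofReal]
    exact indicator_nonneg (fun y hy => by linarith [hy.2]) x
  rw [betaMeasure, integral_withDensity_eq_integral_toReal_smul (f := betaPDF 1 2)
    (measurable_betaPDFReal 1 2).ennreal_ofReal (.of_forall fun _ => ENNReal.ofReal_lt_top)]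
  simp_rw [hpdf, ← indicator_smul_apply_left]
  rw [integral_indicator measurableSet_Ioo, ← integral_Ioc_eq_integral_Ioo,
    ← intervalIntegral.integral_of_le zero_le_one]

theorem Convex.intervalIntegral_two_mul_one_sub_smul_mem [FiniteDimensional ℝ E] {C : Set E}
    {c : ℝ → E} (hC : Convex ℝ C) (hc : ContinuousOn c (Icc 0 1)) (hcC : MapsTo c (Icc 0 1) C) :
    ∫ t in (0 : ℝ)..1, (2 * (1 - t)) • c t ∈ C := by
  have := isProbabilityMeasureBeta one_pos two_pos
  have hsupp : ∀ᵐ x ∂betaMeasure 1 2, x ∈ Icc 0 1 := by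
    rw [betaMeasure,
      ae_withDensity_iff (f := betaPDF 1 2) (measurable_betaPDFReal 1 2).ennreal_ofReal]
    refine .of_forall fun x hx => ⟨?_, ?_⟩
    · exact le_of_not_ge fun h => hx (betaPDF_eq_zero_of_nonpos h)
    · exact le_of_not_ge fun h => hx (betaPDF_eq_zero_of_one_le h)
  rw [← integral_betaMeasure_one_two]
  exact hC.integral_mem_of_continuousOn isCompact_Icc hsupp hc hcC

theorem eq_add_add_intervalIntegral_one_sub_smul [CompleteSpace E] {g v a : ℝ → E}
    (hg : ∀ t ∈ Icc (0 : ℝ) 1, HasDerivAt g (v t) t)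
    (hv : ∀ t ∈ Icc (0 : ℝ) 1, HasDerivAt v (a t) t) (ha : ContinuousOn a (Icc 0 1)) :
    g 1 = g 0 + v 0 + ∫ t in (0 : ℝ)..1, (1 - t) • a t := by
  have hF : ∀ t ∈ uIcc (0 : ℝ) 1,
      HasDerivAt (fun s => g s + (1 - s) • v s) ((1 - t) • a t) t := by
    intro t ht
    rw [uIcc_of_le zero_le_one] at ht
    refine ((hg t ht).add (((hasDerivAt_id' t).const_sub 1).smul (hv t ht))).congr_deriv ?_
    rw [neg_one_smul]
    abel
  have hFi : IntervalIntegrable (fun t => (1 - t) • a t) volume 0 1 :=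
    (ContinuousOn.smul (by fun_prop) ha).intervalIntegrable_of_Icc zero_le_one
  rw [intervalIntegral.integral_eq_sub_of_hasDerivAt hF hFi]
  simp

theorem Convex.mem_singleton_add_of_hasDerivAt [FiniteDimensional ℝ E] {C : Set E}
    {g v a : ℝ → E} (hC : Convex ℝ C)
    (hg : ∀ t ∈ Icc (0 : ℝ) 1, HasDerivAt g (v t) t)
    (hv : ∀ t ∈ Icc (0 : ℝ) 1, HasDerivAt v (a t) t) (ha : ContinuousOn a (Icc 0 1))
    (haC : ∀ t ∈ Icc (0 : ℝ) 1, (1 / 2 : ℝ) • a t ∈ C) :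
    g 1 ∈ ({g 0 + v 0} : Set E) + C := by
  rw [eq_add_add_intervalIntegral_one_sub_smul hg hv ha]
  refine add_mem_add rfl ?_
  convert hC.intervalIntegral_two_mul_one_sub_smul_mem (ha.const_smul (1 / 2 : ℝ)) haC using 3
  rw [Pi.smul_apply, smul_smul]
  congr 1
  ring

theorem stmt_19_general (n : ℕ) (f : (Fin n → ℝ) → (Fin n → ℝ))
    (Φ : ℝ → (Fin n → ℝ) → (Fin n → ℝ)) (Xin Xs C : Set (Fin n → ℝ))
    (hf : ContDiff ℝ 1 f)
    (hC : Convex ℝ C)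
    (hΦ0 : ∀ u ∈ Xin, Φ 0 u = u)
    (hode : ∀ u ∈ Xin, ∀ t ∈ Set.Icc (0:ℝ) 1, HasDerivAt (fun s => Φ s u) (f (Φ t u)) t)
    (herr : ∀ u ∈ Xin, ∀ t ∈ Set.Icc (0:ℝ) 1,
      (1/2 : ℝ) • fderiv ℝ f (Φ t u) (f (Φ t u)) ∈ C) :
    (∀ u ∈ Xin, Φ 1 u ∈ ({u + f u} : Set (Fin n → ℝ)) + C) ∧
    ({y : Fin n → ℝ | ∃ u ∈ Xin, y = u + f u} + C ⊆ Xs →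
      {y : Fin n → ℝ | ∃ u ∈ Xin, y = Φ 1 u} ⊆ Xs) := by
  have hflow : ∀ u ∈ Xin, Φ 1 u ∈ ({u + f u} : Set (Fin n → ℝ)) + C := by
    intro u hu
    have hΦu : ContinuousOn (fun t => Φ t u) (Icc 0 1) :=
      fun t ht => (hode u hu t ht).continuousAt.continuousWithinAt
    have hfΦ : ∀ t ∈ Icc (0 : ℝ) 1,
        HasDerivAt (fun s => f (Φ s u)) (fderiv ℝ f (Φ t u) (f (Φ t u))) t :=
      fun t ht => ((hf.differentiable one_ne_zero _).hasFDerivAt).comp_hasDerivAt t (hode u hu t ht)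
    have hDf : ContinuousOn (fun t => fderiv ℝ f (Φ t u) (f (Φ t u))) (Icc 0 1) :=
      ((hf.continuous_fderiv one_ne_zero).comp_continuousOn hΦu).clm_apply
        (hf.continuous.comp_continuousOn hΦu)
    simpa only [hΦ0 u hu] using hC.mem_singleton_add_of_hasDerivAt (hode u hu) hfΦ hDf (herr u hu)
  refine ⟨hflow, fun hXs y ⟨u, hu, hy⟩ => hXs ?_⟩
  obtain ⟨_, rfl, c, hc, hΦ1⟩ := hflow u hu
  exact hy ▸ hΦ1 ▸ add_mem_add ⟨u, hu, rfl⟩ hc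

/-- Combination of the Lagrange-remainder error characterization with
Algorithm 1: if ½·Df(x)(f(x)) lies in a convex set C on the reachable tube,
then Φ(1,u) ∈ {u + f(u)} + C, and safety of the ResNet outputs expanded by C
implies safety of the neural ODE outputs. -/
theorem stmt_19 (n : ℕ) (f : (Fin n → ℝ) → (Fin n → ℝ))
    (Φ : ℝ → (Fin n → ℝ) → (Fin n → ℝ)) (Xin Xs C : Set (Fin n → ℝ))
    (hf : ContDiff ℝ 1 f)
    (hC : Convex ℝ C)
    (hΦ0 : ∀ u ∈ Xin, Φ 0 u = u)
    (hΦC2 : ∀ u ∈ Xin, ContDiffOn ℝ 2 (fun t => Φ t u) (Set.Icc (0:ℝ) 1))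
    (hode : ∀ u ∈ Xin, ∀ t ∈ Set.Icc (0:ℝ) 1, HasDerivAt (fun s => Φ s u) (f (Φ t u)) t)
    (herr : ∀ u ∈ Xin, ∀ t ∈ Set.Icc (0:ℝ) 1,
      (1/2 : ℝ) • fderiv ℝ f (Φ t u) (f (Φ t u)) ∈ C) :
    (∀ u ∈ Xin, Φ 1 u ∈ ({u + f u} : Set (Fin n → ℝ)) + C) ∧
    ({y : Fin n → ℝ | ∃ u ∈ Xin, y = u + f u} + C ⊆ Xs →
      {y : Fin n → ℝ | ∃ u ∈ Xin, y = Φ 1 u} ⊆ Xs) :=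
  stmt_19_general n f Φ Xin Xs C hf hC hΦ0 hode herr
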